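/- arXiv:1109.0814 — 2 statements merged into one kernel-verified Lean document; each statement's English description precedes it below -/
import Mathlib

section
/- Let $B$ be the unit ball of $\mathbb{C}^n$, $1<p<\infty$, $s>0$, and $\mu$ a positive Borel measure on $B$. If $\sup_{w \in B} \int_B \frac{(1-|w|^2)^s}{|1-\langle z,w\rangle|^{np+s}}\,d\mu(z) < \infty$, then there is a constant $C>0$ such that $\mu(Q_\delta(\xi)) \le C\,\delta^{np}$ for all $\xi \in S$ and $0<\delta<1$. -/
open MeasureTheory Metric Set

noncomputable section

/-- `C^n` as a Euclidean space. -/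
abbrev En (n : ℕ) := EuclideanSpace ℂ (Fin n)

instance En.measureSpace {n : ℕ} : MeasureSpace (En n) :=
  ⟨Measure.map (WithLp.toLp 2) (volume : Measure (Fin n → ℂ))⟩

/-- The Hermitian pairing of z and w. -/
def herm {n : ℕ} (z w : En n) : ℂ := ∑ j, z j * (starRingEnd ℂ) (w j)

/-- The Carleson box Q_delta(xi). -/
def Qbox {n : ℕ} (δ : ℝ) (ξ : En n) : Set (En n) :=
  {z | z ∈ Metric.ball (0 : En n) 1 ∧ ‖1 - herm z ξ‖ < δ}

/-! Testing the hypothesis at `w = (1 - δ) ξ`: on `Q_δ(ξ)` the kernel denominator is at most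
`(3δ)^(np+s)` while `1 - |w|² ≥ δ`, so the kernel is at least `3^{-(np+s)} δ^{-np}` there, and
the bound `M` on its integral gives `μ(Q_δ(ξ)) ≤ 3^{np+s} M δ^{np}`. -/

theorem herm_smul_right {n : ℕ} (z w : En n) (c : ℂ) :
    herm z (c • w) = (starRingEnd ℂ) c * herm z w := by
  simp only [herm, Finset.mul_sum, PiLp.smul_apply, smul_eq_mul, map_mul]
  exact Finset.sum_congr rfl fun _ _ => by ring

theorem continuous_herm_left {n : ℕ} (w : En n) : Continuous fun z : En n => herm z w := by
  unfold herm
  fun_prop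

theorem isOpen_Qbox {n : ℕ} (δ : ℝ) (ξ : En n) : IsOpen (Qbox δ ξ) :=
  isOpen_ball.inter <|
    isOpen_lt (continuous_const.sub (continuous_herm_left ξ)).norm continuous_const

theorem Complex.norm_lt_of_norm_one_sub_lt {h : ℂ} {δ : ℝ} (hh : ‖1 - h‖ < δ) : ‖h‖ < 1 + δ :=
  calc ‖h‖ ≤ ‖(1 : ℂ)‖ + ‖1 - h‖ := by simpa using norm_sub_le (1 : ℂ) (1 - h)
    _ < 1 + δ := by rw [norm_one]; linarith

theorem Complex.norm_one_sub_ofReal_mul_le {h : ℂ} {δ : ℝ} (hδ1 : δ ≤ 1) (hh : ‖1 - h‖ < δ) :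
    ‖1 - ((1 - δ : ℝ) : ℂ) * h‖ ≤ 3 * δ := by
  have hδ0 : 0 ≤ δ := (norm_nonneg _).trans hh.le
  have hsplit : 1 - ((1 - δ : ℝ) : ℂ) * h = (1 - h) + (δ : ℂ) * h := by push_cast; ring
  have hδh : δ * ‖h‖ ≤ δ * (1 + δ) :=
    mul_le_mul_of_nonneg_left (norm_lt_of_norm_one_sub_lt hh).le hδ0
  calc ‖1 - ((1 - δ : ℝ) : ℂ) * h‖ = ‖(1 - h) + (δ : ℂ) * h‖ := by rw [hsplit]
    _ ≤ ‖1 - h‖ + ‖(δ : ℂ) * h‖ := norm_add_le _ _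
    _ = ‖1 - h‖ + δ * ‖h‖ := by rw [norm_mul, Complex.norm_real, Real.norm_of_nonneg hδ0]
    _ ≤ 3 * δ := by nlinarith

theorem Complex.norm_one_sub_ofReal_mul_pos {h : ℂ} {δ : ℝ} (hδ0 : 0 < δ) (hδ1 : δ ≤ 1)
    (hh : ‖1 - h‖ < δ) : 0 < ‖1 - ((1 - δ : ℝ) : ℂ) * h‖ := by
  have hmul : ‖((1 - δ : ℝ) : ℂ) * h‖ ≤ (1 - δ) * (1 + δ) := by
    rw [norm_mul, Complex.norm_real, Real.norm_of_nonneg (by linarith)]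
    exact mul_le_mul_of_nonneg_left (norm_lt_of_norm_one_sub_lt hh).le (by linarith)
  have hrev : 1 - ‖((1 - δ : ℝ) : ℂ) * h‖ ≤ ‖1 - ((1 - δ : ℝ) : ℂ) * h‖ := by
    simpa using norm_sub_norm_le (1 : ℂ) (((1 - δ : ℝ) : ℂ) * h)
  nlinarith

theorem norm_ofReal_one_sub_smul {n : ℕ} {ξ : En n} (hξ : ‖ξ‖ = 1) {δ : ℝ} (hδ1 : δ ≤ 1) :
    ‖((1 - δ : ℝ) : ℂ) • ξ‖ = 1 - δ := by
  rw [norm_smul, hξ, mul_one, Complex.norm_real, Real.norm_of_nonneg (by linarith)]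

theorem inv_le_kernel_of_norm_one_sub_herm_lt {n : ℕ} {ξ z : En n} (hξ : ‖ξ‖ = 1)
    {δ a s : ℝ} (hδ0 : 0 < δ) (hδ1 : δ < 1) (ha : 0 ≤ a) (hs : 0 ≤ s)
    (hz : ‖1 - herm z ξ‖ < δ) :
    (3 ^ (a + s) * δ ^ a)⁻¹ ≤
      (1 - ‖((1 - δ : ℝ) : ℂ) • ξ‖ ^ 2) ^ s / ‖1 - herm z (((1 - δ : ℝ) : ℂ) • ξ)‖ ^ (a + s) := by
  have hherm : herm z (((1 - δ : ℝ) : ℂ) • ξ) = ((1 - δ : ℝ) : ℂ) * herm z ξ := by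
    rw [herm_smul_right, Complex.conj_ofReal]
  have hden_pos := Complex.norm_one_sub_ofReal_mul_pos hδ0 hδ1.le hz
  have hden_le := Complex.norm_one_sub_ofReal_mul_le hδ1.le hz
  have hinv : (3 ^ (a + s) * δ ^ a)⁻¹ = δ ^ s / (3 * δ) ^ (a + s) := by
    rw [Real.mul_rpow (by norm_num) hδ0.le, Real.rpow_add hδ0]
    field_simp
  have hwidth : δ ≤ 1 - (1 - δ) ^ 2 := by nlinarith
  rw [hinv, norm_ofReal_one_sub_smul hξ hδ1.le, hherm]
  exact div_le_div₀ (Real.rpow_nonneg (hδ0.le.trans hwidth) s)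
    (Real.rpow_le_rpow hδ0.le hwidth hs) (Real.rpow_pos_of_pos hden_pos _)
    (Real.rpow_le_rpow hden_pos.le hden_le (by linarith))

theorem mul_measure_le_setLIntegral {α : Type*} [MeasurableSpace α] {μ : Measure α}
    {A B : Set α} {f : α → ENNReal} {c : ENNReal} (hA : MeasurableSet A) (hAB : A ⊆ B)
    (hf : ∀ x ∈ A, c ≤ f x) : c * μ A ≤ ∫⁻ x in B, f x ∂μ :=
  calc c * μ A = ∫⁻ _ in A, c ∂μ := (setLIntegral_const A c).symm
    _ ≤ ∫⁻ x in A, f x ∂μ := setLIntegral_mono' hA hf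
    _ ≤ ∫⁻ x in B, f x ∂μ := lintegral_mono_set hAB

/-- Lemma 2.1, (iii) implies (i). -/
theorem stmt_1 (n : ℕ) (p : ℝ) (hp : 1 < p) (s : ℝ) (hs : 0 < s)
    (μ : Measure (En n)) (M : ℝ)
    (hμ : ∀ w ∈ Metric.ball (0 : En n) 1,
      ∫⁻ z in Metric.ball (0 : En n) 1,
          ENNReal.ofReal ((1 - ‖w‖ ^ 2) ^ s /
            ‖1 - herm z w‖ ^ ((n : ℝ) * p + s)) ∂μ
        ≤ ENNReal.ofReal M) :
    ∃ C : ℝ, 0 < C ∧ ∀ ξ ∈ Metric.sphere (0 : En n) 1, ∀ δ : ℝ, 0 < δ → δ < 1 →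
      μ (Qbox δ ξ) ≤ ENNReal.ofReal (C * δ ^ ((n : ℝ) * p)) := by
  refine ⟨3 ^ ((n : ℝ) * p + s) * max M 1, by positivity, fun ξ hξ δ hδ0 hδ1 => ?_⟩
  have hξ1 : ‖ξ‖ = 1 := mem_sphere_zero_iff_norm.mp hξ
  set w : En n := ((1 - δ : ℝ) : ℂ) • ξ
  have hw : w ∈ ball (0 : En n) 1 := by
    rw [mem_ball_zero_iff, norm_ofReal_one_sub_smul hξ1 hδ1.le]
    linarith
  set c : ℝ := 3 ^ ((n : ℝ) * p + s) * δ ^ ((n : ℝ) * p) with hc_def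
  have hc : 0 < c := by positivity
  have hbound : ENNReal.ofReal c⁻¹ * μ (Qbox δ ξ) ≤ ENNReal.ofReal M :=
    (mul_measure_le_setLIntegral (isOpen_Qbox δ ξ).measurableSet (fun _ hz => hz.1)
      fun z hz => ENNReal.ofReal_le_ofReal <|
        inv_le_kernel_of_norm_one_sub_herm_lt hξ1 hδ0 hδ1
          (mul_nonneg n.cast_nonneg (by linarith)) hs.le hz.2).trans
      (hμ w hw)
  refine (ENNReal.mul_le_mul_iff_right (ENNReal.ofReal_pos.mpr (inv_pos.mpr hc)).ne'
    ENNReal.ofReal_ne_top).mp ?_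
  rw [← ENNReal.ofReal_mul (by positivity)]
  refine hbound.trans (ENNReal.ofReal_le_ofReal ?_)
  calc M ≤ max M 1 := le_max_left M 1
    _ = c⁻¹ * (3 ^ ((n : ℝ) * p + s) * max M 1 * δ ^ ((n : ℝ) * p)) := by
      rw [hc_def]
      field_simp
end
end

section
/- Let $\varphi$ be holomorphic on the unit ball $B$ of $\mathbb{C}^n$, $1<p<\infty$, $0\le\sigma<\infty$, $1+\sigma>n/p$. If the operator $U_\varphi f(z) = \int_0^1 \varphi(tz)\,Rf(tz)\,\frac{dt}{t}$ is bounded on the space $B_p^\sigma(B)$ normed by $\|g\|^p = \int_B |Rg(z)|^p(1-|z|^2)^{(1+\sigma)p-n-1}dv(z)$, then $\varphi$ is bounded on $B$. -/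
open MeasureTheory Metric Set
open scoped ENNReal NNReal

noncomputable section

/-- The radial derivative R f (z), i.e. the derivative of f at z in the direction z. -/
def radialDeriv {n : ℕ} (f : En n → ℂ) (z : En n) : ℂ := fderiv ℂ f z z

/-- The p-th power of the (m = 1) Besov-Sobolev seminorm. -/
def besov1 {n : ℕ} (p σ : ℝ) (g : En n → ℂ) : ℝ≥0∞ :=
  ∫⁻ z in Metric.ball (0 : En n) 1,
    ENNReal.ofReal (‖radialDeriv g z‖ ^ p *
      (1 - ‖z‖ ^ 2) ^ ((1 + σ) * p - n - 1)) ∂volume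

/-- The operator U_φ. -/
def Uop {n : ℕ} (φ f : En n → ℂ) (z : En n) : ℂ :=
  ∫ t in (0 : ℝ)..1, φ (t • z) * radialDeriv f (t • z) / t

/-- The Riemann-Stieltjes operator V_φ. -/
def Vop {n : ℕ} (φ f : En n → ℂ) (z : En n) : ℂ :=
  ∫ t in (0 : ℝ)..1, f (t • z) * radialDeriv φ (t • z) / t

/-!
Iterating `U_φ` on the test functions `F_k(z) = z_i ∫₀¹ φ(tz)^k dt`, whose radial derivative is
`z_i φ(z)^k`, gives `U_φ F_k = F_{k+1}`, so boundedness of `U_φ` forces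
`‖F_k‖^p ≤ C^k ‖F_0‖^p`. If `|φ| > m` with `m^p > C` on some open set, the weighted integral
of `|z_i φ(z)^k|^p` over that set grows like `m^{pk}`, contradicting the geometric bound; hence
`|φ| ≤ C^{1/p}`. The hypothesis `1 + σ > n/p` makes the weight `(1-|z|²)^{(1+σ)p-n-1}`
integrable, so that `F_0(z) = z_i` has finite norm.
-/

open intervalIntegral
open scoped Interval Topology

lemma exists_ofReal_pow_mul_lt {a b : ℝ} (ha : 0 < a) (hab : a < b) {c d : ℝ≥0∞} (hc : c ≠ 0)
    (hd : d ≠ ⊤) : ∃ k : ℕ, ENNReal.ofReal a ^ k * d < ENNReal.ofReal b ^ k * c := by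
  rcases eq_or_ne c ⊤ with rfl | hc'
  · exact ⟨0, by simpa using hd.lt_top⟩
  have hb : 0 < b := ha.trans hab
  have hc0 : 0 < c.toReal := ENNReal.toReal_pos hc hc'
  obtain ⟨k, hk⟩ := pow_unbounded_of_one_lt (d.toReal / c.toReal) ((one_lt_div ha).2 hab)
  refine ⟨k, ?_⟩
  rw [← ENNReal.ofReal_toReal hd, ← ENNReal.ofReal_toReal hc', ← ENNReal.ofReal_pow ha.le,
    ← ENNReal.ofReal_pow hb.le, ← ENNReal.ofReal_mul (pow_nonneg ha.le k),
    ← ENNReal.ofReal_mul (pow_nonneg hb.le k),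
    ENNReal.ofReal_lt_ofReal_iff (mul_pos (pow_pos hb k) hc0)]
  rw [div_lt_iff₀ hc0, div_pow, div_mul_eq_mul_div, lt_div_iff₀ (pow_pos ha k)] at hk
  linarith

section Weight

lemma integrableOn_one_sub_rpow_Ioo {α : ℝ} (hα : -1 < α) :
    IntegrableOn (fun y : ℝ => (1 - y) ^ α) (Ioo 0 1) := by
  have h := (intervalIntegral.intervalIntegrable_rpow' hα (a := 1) (b := 0)).comp_sub_left 1
  simp only [sub_self, sub_zero] at h
  exact h.1.mono_set Ioo_subset_Ioc_self

variable {E : Type*} [NormedAddCommGroup E] [NormedSpace ℝ E] [FiniteDimensional ℝ E]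
  [MeasurableSpace E] [BorelSpace E] [Nontrivial E] (μ : Measure E) [μ.IsAddHaarMeasure]

lemma integrableOn_ball_one_sub_norm_sq_rpow {α : ℝ} (hα : -1 < α) :
    IntegrableOn (fun x : E => (1 - ‖x‖ ^ 2) ^ α) (ball 0 1) μ := by
  rw [integrableOn_fun_norm_addHaar μ (f := fun y => (1 - y ^ 2) ^ α)]
  refine Integrable.mono' ((integrableOn_const (C := 1) (by simp)).add
    (integrableOn_one_sub_rpow_Ioo hα)) (by fun_prop) ?_
  filter_upwards [ae_restrict_mem measurableSet_Ioo] with y ⟨hy0, hy1⟩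
  have hpow : ‖y ^ (Module.finrank ℝ E - 1)‖ ≤ 1 := by
    rw [norm_pow, Real.norm_of_nonneg hy0.le]
    exact pow_le_one₀ hy0.le hy1.le
  have hw : ‖(1 - y ^ 2) ^ α‖ ≤ 1 + (1 - y) ^ α := by
    rw [Real.norm_of_nonneg (Real.rpow_nonneg (by nlinarith) _)]
    rcases le_or_gt 0 α with hα0 | hα0
    · have := Real.rpow_le_one (by nlinarith : 0 ≤ 1 - y ^ 2) (by nlinarith) hα0
      linarith [Real.rpow_nonneg (by linarith : 0 ≤ 1 - y) α]
    · have := Real.rpow_le_rpow_of_nonpos (by linarith : 0 < 1 - y)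
        (by nlinarith : 1 - y ≤ 1 - y ^ 2) hα0.le
      linarith
  rw [norm_smul]
  calc _ ≤ 1 * (1 + (1 - y) ^ α) := by gcongr
    _ = _ := one_mul _

end Weight

section RadialIntegral

variable {E : Type*} [NormedAddCommGroup E] [NormedSpace ℂ E] {g : E → ℂ} {r : ℝ}

lemma smul_mem_ball_of_abs_le {z : E} (hz : z ∈ ball (0 : E) r) {t : ℝ} (ht : |t| ≤ 1) :
    t • z ∈ ball (0 : E) r := by
  rw [mem_ball_zero_iff, norm_smul, Real.norm_eq_abs] at *
  nlinarith [abs_nonneg t, norm_nonneg z]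

lemma exists_norm_fderiv_le_on_closedBall [ProperSpace E] (hg : DifferentiableOn ℂ g (ball 0 r))
    {s : ℝ} (hs : s < r) : ∃ M, ∀ x ∈ closedBall (0 : E) s, ‖fderiv ℂ g x‖ ≤ M := by
  set ρ := (r - s) / 2
  have hρ : 0 < ρ := by simp only [ρ]; linarith
  have hsρ : s + ρ < r := by simp only [ρ]; linarith
  obtain ⟨B, hB⟩ := (isCompact_closedBall (0 : E) (s + ρ)).exists_bound_of_continuousOn
    (hg.continuousOn.mono (closedBall_subset_ball hsρ))
  refine ⟨(B + B) / ρ, fun x hx => ?_⟩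
  have hsub : ball x ρ ⊆ closedBall 0 (s + ρ) := ball_subset_closedBall.trans
    (closedBall_subset_closedBall' (by rw [add_comm]; gcongr; exact hx))
  refine Complex.norm_fderiv_le_div_of_mapsTo_ball
    (hg.mono (hsub.trans (closedBall_subset_ball hsρ))) (fun y hy => ?_) hρ
  rw [mem_closedBall, dist_eq_norm]
  exact (norm_sub_le _ _).trans (add_le_add (hB y (hsub hy)) (hB x (hsub (mem_ball_self hρ))))

lemma hasFDerivAt_comp_smul {t : ℝ} {z : E} (hg : DifferentiableAt ℂ g (t • z)) :
    HasFDerivAt (fun y => g (t • y)) ((t : ℂ) • fderiv ℂ g (t • z)) z := by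
  have hsmul : HasFDerivAt (fun y : E => t • y) ((t : ℂ) • ContinuousLinearMap.id ℂ E) z := by
    simpa only [Complex.coe_smul, id] using (hasFDerivAt_id (𝕜 := ℂ) z).fun_const_smul (t : ℂ)
  have h := hg.hasFDerivAt.comp z hsmul
  rwa [ContinuousLinearMap.comp_smul, ContinuousLinearMap.comp_id] at h

lemma differentiableOn_integral_comp_smul [FiniteDimensional ℂ E]
    (hg : DifferentiableOn ℂ g (ball 0 r)) :
    DifferentiableOn ℂ (fun z => ∫ t in (0 : ℝ)..1, g (t • z)) (ball 0 r) := by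
  borelize E
  intro z₀ hz₀
  obtain ⟨s, hz₀s, hsr⟩ := exists_between (mem_ball_zero_iff.1 hz₀)
  obtain ⟨M, hM⟩ := exists_norm_fderiv_le_on_closedBall hg hsr
  have hε : 0 < s - ‖z₀‖ := by linarith
  have hI : Icc (0 : ℝ) 1 ⊆ Icc (-1) 1 := Icc_subset_Icc (by norm_num) le_rfl
  have hΙ : Ι (0 : ℝ) 1 ⊆ Icc (-1) 1 := by
    rw [uIoc_of_le zero_le_one]
    exact Ioc_subset_Icc_self.trans hI
  have hmaps : ∀ t ∈ Icc (-1 : ℝ) 1, ∀ z ∈ ball z₀ (s - ‖z₀‖), t • z ∈ closedBall (0 : E) s :=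
    fun t ht z hz => ball_subset_closedBall
      (smul_mem_ball_of_abs_le (ball_subset_ball' (by simp) hz) (abs_le.2 ht))
  have hcont : ∀ z ∈ ball z₀ (s - ‖z₀‖), ContinuousOn (fun t : ℝ => g (t • z)) (Icc (-1) 1) :=
    fun z hz => hg.continuousOn.comp (by fun_prop)
      fun t ht => closedBall_subset_ball hsr (hmaps t ht z hz)
  refine (hasFDerivAt_integral_of_dominated_of_fderiv_le (𝕜 := ℂ) (μ := volume)
    (F' := fun z t => (t : ℂ) • fderiv ℂ g (t • z)) (bound := fun _ => M)
    (ball_mem_nhds z₀ hε) ?_ ?_ ?_ ?_ intervalIntegrable_const ?_).differentiableAt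
    |>.differentiableWithinAt
  · filter_upwards [ball_mem_nhds z₀ hε] with z hz
    exact ((hcont z hz).mono hΙ).aestronglyMeasurable measurableSet_uIoc
  · exact ((hcont z₀ (mem_ball_self hε)).mono
      (uIcc_of_le (zero_le_one (α := ℝ)) ▸ hI)).intervalIntegrable
  · exact ((Complex.continuous_ofReal.measurable).smul
      ((measurable_fderiv ℂ g).comp (by fun_prop))).aestronglyMeasurable
  · filter_upwards with t ht z hz
    rw [norm_smul, Complex.norm_real, Real.norm_eq_abs]
    exact (mul_le_of_le_one_left (norm_nonneg _) (abs_le.2 (hΙ ht))).trans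
      (hM _ (hmaps t (hΙ ht) z hz))
  · filter_upwards with t ht z hz
    exact hasFDerivAt_comp_smul (hg.differentiableAt
      (isOpen_ball.mem_nhds (closedBall_subset_ball hsr (hmaps t (hΙ ht) z hz))))

lemma mul_integral_comp_smul_smul (ℓ : E →L[ℂ] ℂ) (z : E) {s : ℝ} (hs : s ≠ 0) :
    ℓ (s • z) * ∫ t in (0 : ℝ)..1, g (t • s • z) = ℓ z * ∫ u in (0 : ℝ)..s, g (u • z) := by
  rw [ℓ.map_smul_of_tower, Complex.real_smul]
  simp_rw [smul_smul]
  rw [integral_comp_mul_right (fun u => g (u • z)) hs, zero_mul, one_mul, Complex.real_smul,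
    Complex.ofReal_inv]
  have hsC : (s : ℂ) ≠ 0 := Complex.ofReal_ne_zero.2 hs
  field_simp

lemma fderiv_mul_integral_comp_smul_apply_self [FiniteDimensional ℂ E] (ℓ : E →L[ℂ] ℂ)
    (hg : DifferentiableOn ℂ g (ball 0 r)) {z : E} (hz : z ∈ ball 0 r) :
    fderiv ℂ (fun y => ℓ y * ∫ t in (0 : ℝ)..1, g (t • y)) z z = ℓ z * g z := by
  set F := fun y => ℓ y * ∫ t in (0 : ℝ)..1, g (t • y)
  have hFz : DifferentiableAt ℂ F z := ℓ.differentiableAt.mul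
    ((differentiableOn_integral_comp_smul hg).differentiableAt (isOpen_ball.mem_nhds hz))
  have hline : HasDerivAt (fun s : ℝ => F (s • z)) (fderiv ℂ F z z) 1 := by
    have hsm : HasDerivAt (fun s : ℝ => s • z) z 1 := by
      simpa using (hasDerivAt_id (1 : ℝ)).smul_const z
    have hF : HasFDerivAt F ((fderiv ℂ F z).restrictScalars ℝ) ((fun s : ℝ => s • z) 1) := by
      simpa using hFz.hasFDerivAt.restrictScalars ℝ
    exact hF.comp_hasDerivAt 1 hsm
  set S := {s : ℝ | s • z ∈ ball (0 : E) r}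
  have hS : IsOpen S := isOpen_ball.preimage (by fun_prop)
  have h1S : (1 : ℝ) ∈ S := by simpa [S] using hz
  have hgS : ContinuousOn (fun s : ℝ => g (s • z)) S :=
    hg.continuousOn.comp (by fun_prop) fun _ hs => hs
  have hIS : uIcc (0 : ℝ) 1 ⊆ S := fun s hs => by
    rw [uIcc_of_le zero_le_one] at hs
    exact smul_mem_ball_of_abs_le hz (abs_le.2 ⟨by linarith [hs.1], hs.2⟩)
  have hprim : HasDerivAt (fun s => ℓ z * ∫ u in (0 : ℝ)..s, g (u • z)) (ℓ z * g z) 1 := by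
    simpa using (integral_hasDerivAt_right ((hgS.mono hIS).intervalIntegrable)
      (hgS.stronglyMeasurableAtFilter hS 1 h1S)
      (hgS.continuousAt (hS.mem_nhds h1S))).const_mul (ℓ z)
  have heq : (fun s => ℓ z * ∫ u in (0 : ℝ)..s, g (u • z)) =ᶠ[𝓝 1] fun s => F (s • z) := by
    filter_upwards [isOpen_ne.mem_nhds one_ne_zero] with s hs
    exact (mul_integral_comp_smul_smul ℓ z hs).symm
  exact hline.unique (hprim.congr_of_eventuallyEq heq.symm)

end RadialIntegral

instance En.isAddHaarMeasure_volume {n : ℕ} : (volume : Measure (En n)).IsAddHaarMeasure :=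
  (PiLp.continuousLinearEquiv 2 ℂ (fun _ : Fin n => ℂ)).symm.isAddHaarMeasure_map volume

section Besov

variable {n : ℕ} {p σ : ℝ}

lemma radialDeriv_congr {f g : En n → ℂ} (h : EqOn f g (ball 0 1)) {z : En n}
    (hz : z ∈ ball 0 1) : radialDeriv f z = radialDeriv g z := by
  rw [radialDeriv, radialDeriv,
    (Filter.eventuallyEq_of_mem (isOpen_ball.mem_nhds hz) h).fderiv_eq]

lemma besov1_eq_of_radialDeriv_eq {f h : En n → ℂ}
    (hf : ∀ z ∈ ball 0 1, radialDeriv f z = h z) :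
    besov1 p σ f = ∫⁻ z in ball (0 : En n) 1,
      ENNReal.ofReal (‖h z‖ ^ p * (1 - ‖z‖ ^ 2) ^ ((1 + σ) * p - n - 1)) :=
  setLIntegral_congr_fun measurableSet_ball fun z hz => by rw [hf z hz]

lemma besov1_congr {f g : En n → ℂ} (h : EqOn f g (ball 0 1)) : besov1 p σ f = besov1 p σ g :=
  besov1_eq_of_radialDeriv_eq fun _ hz => radialDeriv_congr h hz

lemma besov1_proj_ne_top (hp : 0 < p) (hα : -1 < (1 + σ) * p - n - 1) (i : Fin n) :
    besov1 p σ (fun z : En n => z i) ≠ ⊤ := by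
  have : Nonempty (Fin n) := ⟨i⟩
  rw [besov1_eq_of_radialDeriv_eq (h := fun z : En n => z i) fun z _ => by
    simpa [radialDeriv] using congrArg (· z) (EuclideanSpace.proj (𝕜 := ℂ) i).fderiv]
  refine ne_top_of_le_ne_top
    ((integrableOn_ball_one_sub_norm_sq_rpow volume hα).lintegral_lt_top.ne)
    (setLIntegral_mono' measurableSet_ball fun z hz => ENNReal.ofReal_le_ofReal ?_)
  have hz1 : ‖z‖ < 1 := mem_ball_zero_iff.1 hz
  have hzi : ‖z i‖ ^ p ≤ 1 :=
    Real.rpow_le_one (norm_nonneg _) ((PiLp.norm_apply_le z i).trans hz1.le) hp.le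
  exact mul_le_of_le_one_left (Real.rpow_nonneg (by nlinarith [norm_nonneg z]) _) hzi

lemma volume_setOf_apply_eq_zero (i : Fin n) : volume {z : En n | z i = 0} = 0 := by
  let K : Submodule ℝ (En n) :=
    (LinearMap.ker (EuclideanSpace.proj (𝕜 := ℂ) i : En n →ₗ[ℂ] ℂ)).restrictScalars ℝ
  have hK : K ≠ ⊤ := by
    intro h
    have : EuclideanSpace.single i (1 : ℂ) ∈ K := h ▸ Submodule.mem_top
    simp [K] at this
  exact Measure.addHaar_submodule volume K hK

lemma setLIntegral_norm_apply_rpow_mul_weight_pos (i : Fin n) (p α : ℝ) {U : Set (En n)}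
    (hU : IsOpen U) (hne : U.Nonempty) (hsub : U ⊆ ball 0 1) :
    0 < ∫⁻ z in U, ENNReal.ofReal (‖z i‖ ^ p * (1 - ‖z‖ ^ 2) ^ α) := by
  refine (setLIntegral_pos_iff (by fun_prop)).2 ?_
  calc 0 < volume U := hU.measure_pos volume hne
    _ = volume (U \ {z | z i = 0}) := (measure_sdiff_null (volume_setOf_apply_eq_zero i)).symm
    _ ≤ _ := by
      refine measure_mono fun z ⟨hzU, hzi⟩ => ⟨(ENNReal.ofReal_pos.2 ?_).ne', hzU⟩
      have hz1 : ‖z‖ < 1 := mem_ball_zero_iff.1 (hsub hzU)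
      exact mul_pos (Real.rpow_pos_of_pos (norm_pos_iff.2 hzi) _)
        (Real.rpow_pos_of_pos (by nlinarith [norm_nonneg z]) _)

end Besov

section TestFunctions

variable {n : ℕ} {p σ : ℝ} {φ : En n → ℂ}

def testFun (φ : En n → ℂ) (i : Fin n) (k : ℕ) (z : En n) : ℂ :=
  z i * ∫ t in (0 : ℝ)..1, φ (t • z) ^ k

lemma testFun_zero (φ : En n → ℂ) (i : Fin n) : testFun φ i 0 = fun z => z i := by
  funext z
  simp [testFun]

lemma differentiableOn_testFun (hφ : DifferentiableOn ℂ φ (ball 0 1)) (i : Fin n) (k : ℕ) :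
    DifferentiableOn ℂ (testFun φ i k) (ball 0 1) :=
  (EuclideanSpace.proj i).differentiableOn.mul (differentiableOn_integral_comp_smul (hφ.pow k))

lemma radialDeriv_testFun (hφ : DifferentiableOn ℂ φ (ball 0 1)) (i : Fin n) (k : ℕ)
    {z : En n} (hz : z ∈ ball 0 1) : radialDeriv (testFun φ i k) z = z i * φ z ^ k :=
  fderiv_mul_integral_comp_smul_apply_self (EuclideanSpace.proj i) (hφ.pow k) hz

lemma Uop_testFun (hφ : DifferentiableOn ℂ φ (ball 0 1)) (i : Fin n) (k : ℕ) :
    EqOn (Uop φ (testFun φ i k)) (testFun φ i (k + 1)) (ball 0 1) := by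
  intro z hz
  rw [Uop, testFun, ← intervalIntegral.integral_const_mul]
  refine intervalIntegral.integral_congr_ae (Filter.Eventually.of_forall fun t ht => ?_)
  rw [uIoc_of_le zero_le_one] at ht
  have htz : t • z ∈ ball 0 1 := smul_mem_ball_of_abs_le hz (abs_le.2 ⟨by linarith [ht.1], ht.2⟩)
  rw [radialDeriv_testFun hφ i k htz, PiLp.smul_apply, Complex.real_smul]
  have htC : (t : ℂ) ≠ 0 := Complex.ofReal_ne_zero.2 ht.1.ne'
  field_simp
  ring

lemma besov1_testFun_le_pow (hφ : DifferentiableOn ℂ φ (ball 0 1)) {C : ℝ}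
    (hU : ∀ f : En n → ℂ, DifferentiableOn ℂ f (ball 0 1) → besov1 p σ f ≠ ⊤ →
      besov1 p σ (Uop φ f) ≤ ENNReal.ofReal C * besov1 p σ f)
    (i : Fin n) (h0 : besov1 p σ (testFun φ i 0) ≠ ⊤) (k : ℕ) :
    besov1 p σ (testFun φ i k) ≤ ENNReal.ofReal C ^ k * besov1 p σ (testFun φ i 0) := by
  induction k with
  | zero => simp
  | succ k ih =>
    have hk : besov1 p σ (testFun φ i k) ≠ ⊤ :=
      ne_top_of_le_ne_top (ENNReal.mul_ne_top (by finiteness) h0) ih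
    calc besov1 p σ (testFun φ i (k + 1)) = besov1 p σ (Uop φ (testFun φ i k)) :=
          (besov1_congr (Uop_testFun hφ i k)).symm
      _ ≤ ENNReal.ofReal C * besov1 p σ (testFun φ i k) :=
          hU _ (differentiableOn_testFun hφ i k) hk
      _ ≤ ENNReal.ofReal C * (ENNReal.ofReal C ^ k * besov1 p σ (testFun φ i 0)) := by gcongr
      _ = ENNReal.ofReal C ^ (k + 1) * besov1 p σ (testFun φ i 0) := by ring

lemma exists_pow_mul_le_besov1_testFun (hφ : DifferentiableOn ℂ φ (ball 0 1)) (hp : 0 < p)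
    (i : Fin n) {m : ℝ} (hm : 0 ≤ m) {w : En n} (hw : w ∈ ball 0 1) (hmw : m < ‖φ w‖) :
    ∃ c ≠ 0, ∀ k : ℕ, ENNReal.ofReal (m ^ p) ^ k * c ≤ besov1 p σ (testFun φ i k) := by
  set α := (1 + σ) * p - n - 1
  set U := ball (0 : En n) 1 ∩ (fun z => ‖φ z‖) ⁻¹' Ioi m
  have hU : IsOpen U := hφ.continuousOn.norm.isOpen_inter_preimage isOpen_ball isOpen_Ioi
  refine ⟨∫⁻ z in U, ENNReal.ofReal (‖z i‖ ^ p * (1 - ‖z‖ ^ 2) ^ α),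
    (setLIntegral_norm_apply_rpow_mul_weight_pos i p α hU ⟨w, hw, hmw⟩ inter_subset_left).ne',
    fun k => ?_⟩
  have hmp : 0 ≤ m ^ p := Real.rpow_nonneg hm p
  rw [besov1_eq_of_radialDeriv_eq fun _ hz => radialDeriv_testFun hφ i k hz,
    ← lintegral_const_mul' _ _ (by finiteness)]
  refine le_trans (setLIntegral_mono' hU.measurableSet fun z hz => ?_)
    (lintegral_mono_set inter_subset_left)
  have hW : 0 ≤ (1 - ‖z‖ ^ 2) ^ α :=
    Real.rpow_nonneg (by nlinarith [norm_nonneg z, mem_ball_zero_iff.1 hz.1]) _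
  have hφz : (m ^ p) ^ k ≤ (‖φ z‖ ^ p) ^ k :=
    pow_le_pow_left₀ hmp (Real.rpow_le_rpow hm hz.2.le hp.le) k
  rw [← ENNReal.ofReal_pow hmp, ← ENNReal.ofReal_mul (pow_nonneg hmp k), norm_mul, norm_pow,
    Real.mul_rpow (norm_nonneg _) (pow_nonneg (norm_nonneg _) _),
    ← Real.rpow_pow_comm (norm_nonneg _)]
  refine ENNReal.ofReal_le_ofReal ?_
  calc (m ^ p) ^ k * (‖z i‖ ^ p * (1 - ‖z‖ ^ 2) ^ α)
      ≤ (‖φ z‖ ^ p) ^ k * (‖z i‖ ^ p * (1 - ‖z‖ ^ 2) ^ α) :=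
        mul_le_mul_of_nonneg_right hφz (mul_nonneg (Real.rpow_nonneg (norm_nonneg _) _) hW)
    _ = ‖z i‖ ^ p * (‖φ z‖ ^ p) ^ k * (1 - ‖z‖ ^ 2) ^ α := by ring

end TestFunctions

theorem stmt_17_general (n : ℕ) (p σ : ℝ) (hp : 1 < p)
    (hn : (n : ℝ) / p < 1 + σ) (φ : En n → ℂ)
    (hφ : DifferentiableOn ℂ φ (Metric.ball (0 : En n) 1))
    (hb : ∃ C : ℝ, 0 < C ∧ ∀ f : En n → ℂ,
      DifferentiableOn ℂ f (Metric.ball (0 : En n) 1) → besov1 p σ f ≠ ⊤ →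
        besov1 p σ (Uop φ f) ≤ ENNReal.ofReal C * besov1 p σ f) :
    ∃ K : ℝ, ∀ z ∈ Metric.ball (0 : En n) 1, ‖φ z‖ ≤ K := by
  obtain ⟨C, hC, hU⟩ := hb
  rcases Nat.eq_zero_or_pos n with rfl | hn0
  · exact ⟨‖φ 0‖, fun z _ => by rw [Subsingleton.elim z 0]⟩
  have hp0 : 0 < p := zero_lt_one.trans hp
  have hα : -1 < (1 + σ) * p - n - 1 := by
    rw [div_lt_iff₀ hp0] at hn
    linarith
  let i : Fin n := ⟨0, hn0⟩
  have h0 : besov1 p σ (testFun φ i 0) ≠ ⊤ := testFun_zero φ i ▸ besov1_proj_ne_top hp0 hα i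
  refine ⟨C ^ p⁻¹, fun w hw => not_lt.1 fun hCw => ?_⟩
  obtain ⟨m, hCm, hmw⟩ := exists_between hCw
  have hCmp : C < m ^ p := by
    simpa [← Real.rpow_mul hC.le, inv_mul_cancel₀ hp0.ne'] using
      Real.rpow_lt_rpow (Real.rpow_nonneg hC.le _) hCm hp0
  obtain ⟨c, hc, hlow⟩ := exists_pow_mul_le_besov1_testFun hφ hp0 i
    ((Real.rpow_nonneg hC.le _).trans hCm.le) hw hmw
  obtain ⟨k, hk⟩ := exists_ofReal_pow_mul_lt hC hCmp hc h0
  exact lt_irrefl _ ((hk.trans_le (hlow k)).trans_le (besov1_testFun_le_pow hφ hU i h0 k))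

/-- if U_φ is bounded on B_p^σ(B) then φ is bounded. -/
theorem stmt_17 (n : ℕ) (p σ : ℝ) (hp : 1 < p) (hσ : 0 ≤ σ)
    (hn : (n : ℝ) / p < 1 + σ) (φ : En n → ℂ)
    (hφ : DifferentiableOn ℂ φ (Metric.ball (0 : En n) 1))
    (hb : ∃ C : ℝ, 0 < C ∧ ∀ f : En n → ℂ,
      DifferentiableOn ℂ f (Metric.ball (0 : En n) 1) → besov1 p σ f ≠ ⊤ →
        besov1 p σ (Uop φ f) ≤ ENNReal.ofReal C * besov1 p σ f) :
    ∃ K : ℝ, ∀ z ∈ Metric.ball (0 : En n) 1, ‖φ z‖ ≤ K :=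
  stmt_17_general n p σ hp hn φ hφ hb
end
end
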